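/- arXiv:1206.2025 — 3 statements merged into one kernel-verified Lean document; each statement's English description precedes it below -/
import Mathlib

section
/- The subsets I^+(R) := {φ ∈ E(R) : ∃B, i < B ⇒ φ_{ij} = 0} and I^-(R) := {φ ∈ E(R) : ∃B, j > B ⇒ φ_{ij} = 0} are two-sided ideals of E(R), and they satisfy I^+(R) + I^-(R) = E(R). -/
/-!
`I^+(R)` and `I^-(R)` consist of the matrices vanishing eventually along a filter on `ℤ × ℤ`:
the filter away from the diagonal joined with the one towards the top rows, resp. the right
columns. Such matrices form a submodule, which gives the additive closure properties. A band of
width `K` moves a row (column) bound by at most `K`, which gives the ideal property. Every band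
matrix splits into its rows `i ≥ 0`, which lie in `I^+(R)`, and its rows `i < 0`, which lie in
`I^-(R)` because the band confines their support to the columns `j < K`.
-/

open scoped BigOperators

def EMat (R : Type*) [NonUnitalRing R] : Set (ℤ → ℤ → R) :=
  {φ | ∃ K : ℤ, ∀ i j : ℤ, K < |i - j| → φ i j = 0}

noncomputable def matMul {R : Type*} [NonUnitalRing R] (φ ψ : ℤ → ℤ → R) : ℤ → ℤ → R :=
  fun i l => ∑ᶠ j : ℤ, φ i j * ψ j l

def Iplus (R : Type*) [NonUnitalRing R] : Set (ℤ → ℤ → R) :=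
  {φ | φ ∈ EMat R ∧ ∃ B : ℤ, ∀ i j : ℤ, i < B → φ i j = 0}

def Iminus (R : Type*) [NonUnitalRing R] : Set (ℤ → ℤ → R) :=
  {φ | φ ∈ EMat R ∧ ∃ B : ℤ, ∀ i j : ℤ, B < j → φ i j = 0}

open Filter

namespace BandMatrix

section Filters

noncomputable def offDiagonal : Filter (ℤ × ℤ) := comap (fun p => |p.1 - p.2|) atTop

noncomputable def topRows : Filter (ℤ × ℤ) := comap Prod.fst atBot

noncomputable def rightColumns : Filter (ℤ × ℤ) := comap Prod.snd atTop

variable {P : ℤ → ℤ → Prop}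

theorem eventually_offDiagonal_iff :
    (∀ᶠ p in offDiagonal, P p.1 p.2) ↔ ∃ K, ∀ i j, K < |i - j| → P i j := by
  simp [offDiagonal, (atTop_basis_Ioi.comap _).eventually_iff]

theorem eventually_topRows_iff :
    (∀ᶠ p in topRows, P p.1 p.2) ↔ ∃ B, ∀ i j, i < B → P i j := by
  simp [topRows, (atBot_basis_Iio.comap _).eventually_iff]

theorem eventually_rightColumns_iff :
    (∀ᶠ p in rightColumns, P p.1 p.2) ↔ ∃ B, ∀ i j, B < j → P i j := by
  simp [rightColumns, (atTop_basis_Ioi.comap _).eventually_iff]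

end Filters

def eventuallyZero (k R : Type*) [Semiring k] [AddCommMonoid R] [Module k R]
    (l : Filter (ℤ × ℤ)) : Submodule k (ℤ → ℤ → R) where
  carrier := {φ | ∀ᶠ p in l, φ p.1 p.2 = 0}
  add_mem' hφ hψ := (hφ.and hψ).mono fun _ h => by simp [h.1, h.2]
  zero_mem' := univ_mem' fun _ => rfl
  smul_mem' a _ hφ := hφ.mono fun _ h => by simp [h]

variable {R : Type*} [NonUnitalRing R]

section Submodules

variable (k : Type*) [Semiring k] [Module k R]

theorem Iplus_eq_eventuallyZero : Iplus R = eventuallyZero k R (offDiagonal ⊔ topRows) := by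
  ext φ
  exact (eventually_sup.trans (and_congr eventually_offDiagonal_iff eventually_topRows_iff)).symm

theorem Iminus_eq_eventuallyZero :
    Iminus R = eventuallyZero k R (offDiagonal ⊔ rightColumns) := by
  ext φ
  exact (eventually_sup.trans
    (and_congr eventually_offDiagonal_iff eventually_rightColumns_iff)).symm

end Submodules

section Products

variable {φ ψ : ℤ → ℤ → R}

theorem matMul_apply_eq_zero {i l : ℤ} (h : ∀ j, φ i j = 0 ∨ ψ j l = 0) :
    matMul φ ψ i l = 0 :=
  finsum_eq_zero_of_forall_eq_zero fun j => by rcases h j with h | h <;> simp [h]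

theorem eq_zero_or_eq_zero_of_band {K K' : ℤ} (hφ : ∀ i j, K < |i - j| → φ i j = 0)
    (hψ : ∀ j l, K' < |j - l| → ψ j l = 0) {i l : ℤ} (h : K + K' < |i - l|) (j : ℤ) :
    φ i j = 0 ∨ ψ j l = 0 := by
  by_contra! hne
  have hij := not_lt.mp (mt (hφ i j) hne.1)
  have hjl := not_lt.mp (mt (hψ j l) hne.2)
  linarith [abs_sub_le i j l]

theorem matMul_mem_EMat (hφ : φ ∈ EMat R) (hψ : ψ ∈ EMat R) : matMul φ ψ ∈ EMat R := by
  obtain ⟨K, hK⟩ := hφ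
  obtain ⟨K', hK'⟩ := hψ
  exact ⟨K + K', fun i l h => matMul_apply_eq_zero (eq_zero_or_eq_zero_of_band hK hK' h)⟩

theorem matMul_mem_Iplus_right (hφ : φ ∈ Iplus R) (hψ : ψ ∈ EMat R) :
    matMul φ ψ ∈ Iplus R := by
  obtain ⟨hφE, B, hB⟩ := hφ
  exact ⟨matMul_mem_EMat hφE hψ, B, fun i l hi => matMul_apply_eq_zero fun j => .inl (hB i j hi)⟩

theorem matMul_mem_Iplus_left (hφ : φ ∈ EMat R) (hψ : ψ ∈ Iplus R) :
    matMul φ ψ ∈ Iplus R := by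
  obtain ⟨K, hK⟩ := hφ
  obtain ⟨hψE, B, hB⟩ := hψ
  refine ⟨matMul_mem_EMat ⟨K, hK⟩ hψE, B - K, fun i l hi => matMul_apply_eq_zero fun j => ?_⟩
  refine (lt_or_ge K |i - j|).imp (hK i j) fun hij => hB j l ?_
  linarith [(abs_sub_le_iff.mp hij).2]

theorem matMul_mem_Iminus_right (hφ : φ ∈ Iminus R) (hψ : ψ ∈ EMat R) :
    matMul φ ψ ∈ Iminus R := by
  obtain ⟨hφE, B, hB⟩ := hφ
  obtain ⟨K, hK⟩ := hψ
  refine ⟨matMul_mem_EMat hφE ⟨K, hK⟩, B + K, fun i l hl => matMul_apply_eq_zero fun j => ?_⟩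
  refine (lt_or_ge B j).imp (hB i j) fun hj => hK j l ?_
  linarith [neg_abs_le (j - l)]

theorem matMul_mem_Iminus_left (hφ : φ ∈ EMat R) (hψ : ψ ∈ Iminus R) :
    matMul φ ψ ∈ Iminus R := by
  obtain ⟨hψE, B, hB⟩ := hψ
  exact ⟨matMul_mem_EMat hφ hψE, B, fun i l hl => matMul_apply_eq_zero fun j => .inr (hB j l hl)⟩

end Products

theorem exists_Iplus_Iminus_add_eq {φ : ℤ → ℤ → R} (hφ : φ ∈ EMat R) :
    ∃ α ∈ Iplus R, ∃ β ∈ Iminus R, φ = α + β := by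
  obtain ⟨K, hK⟩ := hφ
  refine ⟨fun i j => if 0 ≤ i then φ i j else 0, ⟨⟨K, fun i j h => by simp [hK i j h]⟩, 0,
    fun i j hi => if_neg hi.not_ge⟩, fun i j => if 0 ≤ i then 0 else φ i j,
    ⟨⟨K, fun i j h => by simp [hK i j h]⟩, K, fun i j hj => ?_⟩, ?_⟩
  · dsimp only
    split_ifs with hi
    · rfl
    · exact hK i j (by linarith [neg_abs_le (i - j)])
  · ext i j
    by_cases hi : 0 ≤ i <;> simp [hi]

end BandMatrix

open BandMatrix in
theorem iplus_iminus_two_sided_ideals_general (k R : Type*) [Field k] [NonUnitalRing R]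
    [Module k R] :
    -- I^+(R) is a two-sided ideal
    ((∀ φ ψ, φ ∈ Iplus R → ψ ∈ Iplus R → φ + ψ ∈ Iplus R) ∧
     (∀ φ, φ ∈ Iplus R → -φ ∈ Iplus R) ∧
     (∀ (a : k) φ, φ ∈ Iplus R → a • φ ∈ Iplus R) ∧
     (∀ φ ψ, φ ∈ Iplus R → ψ ∈ EMat R → matMul φ ψ ∈ Iplus R ∧ matMul ψ φ ∈ Iplus R)) ∧
    -- I^-(R) is a two-sided ideal
    ((∀ φ ψ, φ ∈ Iminus R → ψ ∈ Iminus R → φ + ψ ∈ Iminus R) ∧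
     (∀ φ, φ ∈ Iminus R → -φ ∈ Iminus R) ∧
     (∀ (a : k) φ, φ ∈ Iminus R → a • φ ∈ Iminus R) ∧
     (∀ φ ψ, φ ∈ Iminus R → ψ ∈ EMat R → matMul φ ψ ∈ Iminus R ∧ matMul ψ φ ∈ Iminus R)) ∧
    -- I^+(R) + I^-(R) = E(R)
    (∀ φ, φ ∈ EMat R → ∃ α ∈ Iplus R, ∃ β ∈ Iminus R, φ = α + β) := by
  have hplus := Iplus_eq_eventuallyZero k (R := R)
  have hminus := Iminus_eq_eventuallyZero k (R := R)
  refine ⟨⟨hplus ▸ fun _ _ => add_mem, hplus ▸ fun _ => neg_mem,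
      hplus ▸ fun a _ => Submodule.smul_mem _ a,
      fun φ ψ hφ hψ => ⟨matMul_mem_Iplus_right hφ hψ, matMul_mem_Iplus_left hψ hφ⟩⟩,
    ⟨hminus ▸ fun _ _ => add_mem, hminus ▸ fun _ => neg_mem,
      hminus ▸ fun a _ => Submodule.smul_mem _ a,
      fun φ ψ hφ hψ => ⟨matMul_mem_Iminus_right hφ hψ, matMul_mem_Iminus_left hψ hφ⟩⟩,
    fun _ => exists_Iplus_Iminus_add_eq⟩

theorem iplus_iminus_two_sided_ideals (k R : Type*) [Field k] [NonUnitalRing R]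
    [Module k R] [SMulCommClass k R R] [IsScalarTower k R R] :
    -- I^+(R) is a two-sided ideal
    ((∀ φ ψ, φ ∈ Iplus R → ψ ∈ Iplus R → φ + ψ ∈ Iplus R) ∧
     (∀ φ, φ ∈ Iplus R → -φ ∈ Iplus R) ∧
     (∀ (a : k) φ, φ ∈ Iplus R → a • φ ∈ Iplus R) ∧
     (∀ φ ψ, φ ∈ Iplus R → ψ ∈ EMat R → matMul φ ψ ∈ Iplus R ∧ matMul ψ φ ∈ Iplus R)) ∧
    -- I^-(R) is a two-sided ideal
    ((∀ φ ψ, φ ∈ Iminus R → ψ ∈ Iminus R → φ + ψ ∈ Iminus R) ∧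
     (∀ φ, φ ∈ Iminus R → -φ ∈ Iminus R) ∧
     (∀ (a : k) φ, φ ∈ Iminus R → a • φ ∈ Iminus R) ∧
     (∀ φ ψ, φ ∈ Iminus R → ψ ∈ EMat R → matMul φ ψ ∈ Iminus R ∧ matMul ψ φ ∈ Iminus R)) ∧
    -- I^+(R) + I^-(R) = E(R)
    (∀ φ, φ ∈ EMat R → ∃ α ∈ Iplus R, ∃ β ∈ Iminus R, φ = α + β) :=
  iplus_iminus_two_sided_ideals_general k R
end

section
/- The operators H_i defined by (H_i f)_{s_1…0…s_n} := (−1)^{#{j : j>i, s_j=0}} Σ_{γ_i∈{±}} P_i^{−γ_i} f_{s_1…γ_i…s_n} (and zero on components with s_i ∈ {±}) satisfy H_i² = 0, H_iH_j + H_jH_i = 0, ∂_iH_j + H_j∂_i = 0 for i ≠ j, and ∂_iH_i + H_i∂_i = 1 − ε_i. -/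
/-!
STATEMENT 9: The operators `H_i` on `N^•`, defined by
`(H_i f)_{s₁…0…s_n} = (−1)^{#{j : j>i, s_j=0}} ∑_{γ∈{±}} P_i^{−γ} f_{s₁…γ…s_n}`
(and zero on components with `s_i ∈ {±}`), satisfy `H_i² = 0`,
`H_iH_j + H_jH_i = 0`, `∂_iH_j + H_j∂_i = 0` for `i ≠ j`, and
`∂_iH_i + H_i∂_i = 1 − ε_i`.
-/

open scoped Classical

abbrev Fam (n : ℕ) (A : Type*) := (Fin n → SignType) → A

noncomputable def zcount {n : ℕ} (s : Fin n → SignType) (i : Fin n) : ℕ :=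
  (Finset.univ.filter fun j => i < j ∧ s j = 0).card

noncomputable def bd {n : ℕ} {A : Type*} [Ring A] (i : Fin n) (f : Fam n A) : Fam n A :=
  fun s => if s i = 0 then 0
    else ((-1 : ℤ) ^ zcount s i) • f (Function.update s i 0)

noncomputable def Psgn {n : ℕ} {A : Type*} [Ring A] (P : Fin n → A) (i : Fin n) :
    SignType → A
  | SignType.pos => P i
  | SignType.neg => 1 - P i
  | SignType.zero => 0

noncomputable def eps {n : ℕ} {A : Type*} [Ring A] (P : Fin n → A) (i : Fin n)
    (f : Fam n A) : Fam n A :=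
  fun s => if s i = 0 then 0
    else ((s i : ℤ)) • (Psgn P i (s i) *
      ((1 : ℤ) • f (Function.update s i 1) + (-1 : ℤ) • f (Function.update s i (-1))))

/-- The homotopy operator `H_i`: `P_i^{−γ}` is `P_i⁻ = 1 − P_i⁺` for `γ = +`
and `P_i⁺` for `γ = −`. -/
noncomputable def hmt {n : ℕ} {A : Type*} [Ring A] (P : Fin n → A) (i : Fin n)
    (f : Fam n A) : Fam n A :=
  fun s => if s i = 0 then
      ((-1 : ℤ) ^ zcount s i) •
        ((1 - P i) * f (Function.update s i 1) + P i * f (Function.update s i (-1)))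
    else 0

/-!
All four identities are checked on each component. Besides bookkeeping of `Function.update`,
two facts carry the proof: since `P i` and `P j` commute, the averages
`x ↦ (1 - P i) x₊ + P i x₋` in directions `i` and `j` commute; and the signs
`(-1) ^ zcount` picked up by passing to the faces `i` and `j` in the two orders are opposite,
because exactly one of the two counts sees the other zero coordinate.
-/

open Function

section zcount

variable {n : ℕ} (s : Fin n → SignType)

theorem zcount_update_of_not_lt {i j : Fin n} (h : ¬j < i) (a : SignType) :
    zcount (update s i a) j = zcount s j := by
  unfold zcount
  congr 1
  refine Finset.filter_congr fun k _ => ?_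
  rcases eq_or_ne k i with rfl | hk
  · simp [h]
  · simp [update_of_ne hk]

theorem zcount_update_self (i : Fin n) (a : SignType) : zcount (update s i a) i = zcount s i :=
  zcount_update_of_not_lt s (lt_irrefl i) a

theorem zcount_update_zero_of_lt {i j : Fin n} (h : j < i) {a : SignType} (ha : a ≠ 0) :
    zcount (update s i 0) j = zcount (update s i a) j + 1 := by
  unfold zcount
  rw [← Finset.card_insert_of_notMem (a := i) (by simp [ha])]
  congr 1
  ext k
  rcases eq_or_ne k i with rfl | hk
  · simp [h]
  · simp [hk]

theorem zcount_update_congr (i j : Fin n) {a b : SignType} (ha : a ≠ 0) (hb : b ≠ 0) :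
    zcount (update s i a) j = zcount (update s i b) j := by
  by_cases h : j < i
  · have := zcount_update_zero_of_lt s h ha
    have := zcount_update_zero_of_lt s h hb
    omega
  · rw [zcount_update_of_not_lt s h, zcount_update_of_not_lt s h]

theorem odd_zcount_update_add_zcount_update {i j : Fin n} (hij : i ≠ j) {a b : SignType}
    (ha : a ≠ 0) (hb : b ≠ 0) :
    Odd (zcount (update s j 0) i + zcount (update s i a) j +
      (zcount (update s i 0) j + zcount (update s j b) i)) := by
  wlog h : i < j generalizing i j a b
  · rw [add_comm]
    exact this hij.symm hb ha (lt_of_le_of_ne (not_lt.1 h) hij.symm)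
  rw [zcount_update_zero_of_lt s h hb, zcount_update_of_not_lt s h.asymm,
    zcount_update_of_not_lt s h.asymm]
  exact ⟨zcount s j + zcount (update s j b) i, by ring⟩

end zcount

theorem neg_one_pow_smul_add_neg_one_pow_smul {M : Type*} [AddCommGroup M] {k l : ℕ}
    (h : Odd (k + l)) (x : M) : (-1 : ℤ) ^ k • x + (-1 : ℤ) ^ l • x = 0 := by
  have hkl : (-1 : ℤ) ^ (k + l) = -1 := h.neg_one_pow
  have hl : ((-1 : ℤ) ^ l) ^ 2 = 1 := by rw [← pow_mul, Even.neg_one_pow ⟨l, by ring⟩]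
  have : (-1 : ℤ) ^ k + (-1 : ℤ) ^ l = 0 := by
    linear_combination (-1 : ℤ) ^ l * hkl - (-1 : ℤ) ^ k * hl
  rw [← add_smul, this, zero_smul]

theorem one_sub_mul_add_mul_comm {A : Type*} [Ring A] {p q : A} (h : Commute p q) (a b c d : A) :
    (1 - p) * ((1 - q) * a + q * b) + p * ((1 - q) * c + q * d)
      = (1 - q) * ((1 - p) * a + p * c) + q * ((1 - p) * b + p * d) := by
  have h₁ : Commute (1 - p) q := (Commute.one_left q).sub_left h
  have h₂ : Commute p (1 - q) := (Commute.one_right p).sub_right h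
  have h₃ : Commute (1 - p) (1 - q) := (Commute.one_right (1 - p)).sub_right h₁
  simp only [mul_add, ← mul_assoc, h.eq, h₁.eq, h₂.eq, h₃.eq]
  abel

section Operators

variable {n : ℕ} {A : Type*} [Ring A] (P : Fin n → A) {i j : Fin n} (f : Fam n A)
  {s : Fin n → SignType}

theorem hmt_apply_of_eq_zero (h : s i = 0) :
    hmt P i f s = (-1 : ℤ) ^ zcount s i •
      ((1 - P i) * f (update s i 1) + P i * f (update s i (-1))) :=
  if_pos h

theorem hmt_apply_of_ne_zero (h : s i ≠ 0) : hmt P i f s = 0 :=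
  if_neg h

theorem bd_apply_of_eq_zero (h : s i = 0) : bd i f s = 0 :=
  if_pos h

theorem bd_apply_of_ne_zero (h : s i ≠ 0) :
    bd i f s = (-1 : ℤ) ^ zcount s i • f (update s i 0) :=
  if_neg h

theorem eps_apply_of_eq_zero (h : s i = 0) : eps P i f s = 0 :=
  if_pos h

theorem sub_eps_apply_of_ne_zero (h : s i ≠ 0) :
    f s - eps P i f s = (1 - P i) * f (update s i 1) + P i * f (update s i (-1)) := by
  simp only [eps, if_neg h]
  rcases hs : s i with _ | _ | _
  · exact absurd hs h
  · rw [show update s i (-1) = s by rw [update_eq_self_iff, hs]; rfl]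
    simp [Psgn]
    noncomm_ring
  · rw [show update s i 1 = s by rw [update_eq_self_iff, hs]; rfl]
    simp [Psgn]
    noncomm_ring

theorem hmt_hmt_self : hmt P i (hmt P i f) = 0 := by
  funext s
  by_cases h : s i = 0
  · rw [hmt_apply_of_eq_zero P _ h, hmt_apply_of_ne_zero P f (by simp),
      hmt_apply_of_ne_zero P f (by simp)]
    simp
  · exact hmt_apply_of_ne_zero P _ h

theorem hmt_hmt_add_hmt_hmt (hP : Commute (P i) (P j)) :
    hmt P i (hmt P j f) + hmt P j (hmt P i f) = 0 := by
  rcases eq_or_ne i j with rfl | hij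
  · rw [hmt_hmt_self, add_zero]
  funext s
  rw [Pi.add_apply, Pi.zero_apply]
  obtain hi | hi := ne_or_eq (s i) 0
  · simp [hmt, hi, update_of_ne hij]
  obtain hj | hj := ne_or_eq (s j) 0
  · simp [hmt, hj, update_of_ne hij.symm]
  have hj' : ∀ a, update s i a j = 0 := fun a => by rwa [update_of_ne hij.symm]
  have hi' : ∀ a, update s j a i = 0 := fun a => by rwa [update_of_ne hij]
  rw [hmt_apply_of_eq_zero P _ hi, hmt_apply_of_eq_zero P _ hj,
    hmt_apply_of_eq_zero P f (hj' 1), hmt_apply_of_eq_zero P f (hj' (-1)),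
    hmt_apply_of_eq_zero P f (hi' 1), hmt_apply_of_eq_zero P f (hi' (-1)),
    zcount_update_congr s i j (a := -1) (b := 1) (by decide) (by decide),
    zcount_update_congr s j i (a := -1) (b := 1) (by decide) (by decide)]
  simp only [mul_smul_comm, ← smul_add, smul_smul, ← pow_add, update_comm hij.symm]
  rw [one_sub_mul_add_mul_comm hP]
  apply neg_one_pow_smul_add_neg_one_pow_smul
  have hsi : update s i 0 = s := update_eq_self_iff.2 hi.symm
  have hsj : update s j 0 = s := update_eq_self_iff.2 hj.symm
  have := odd_zcount_update_add_zcount_update s hij (a := 1) (b := 1) (by decide) (by decide)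
  rwa [hsi, hsj] at this

theorem bd_hmt_add_hmt_bd (hij : i ≠ j) : bd i (hmt P j f) + hmt P j (bd i f) = 0 := by
  funext s
  rw [Pi.add_apply, Pi.zero_apply]
  obtain hj | hj := ne_or_eq (s j) 0
  · simp [hmt, bd, hj, update_of_ne hij.symm]
  by_cases hi : s i = 0
  · simp [hmt, bd, hi, hj, update_of_ne hij]
  have hi' : ∀ a, update s j a i ≠ 0 := fun a => by rwa [update_of_ne hij]
  rw [bd_apply_of_ne_zero _ hi, hmt_apply_of_eq_zero P _ hj,
    hmt_apply_of_eq_zero P f (by rwa [update_of_ne hij.symm]),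
    bd_apply_of_ne_zero f (hi' 1), bd_apply_of_ne_zero f (hi' (-1)),
    zcount_update_congr s j i (a := -1) (b := 1) (by decide) (by decide)]
  simp only [mul_smul_comm, ← smul_add, smul_smul, ← pow_add, update_comm hij.symm]
  apply neg_one_pow_smul_add_neg_one_pow_smul
  have := odd_zcount_update_add_zcount_update s hij (a := s i) (b := 1) hi (by decide)
  have hsj : update s j 0 = s := update_eq_self_iff.2 hj.symm
  rwa [hsj, update_eq_self, add_add_add_comm] at this

theorem bd_hmt_add_hmt_bd_self : bd i (hmt P i f) + hmt P i (bd i f) = f - eps P i f := by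
  funext s
  rw [Pi.add_apply, Pi.sub_apply]
  by_cases h : s i = 0
  · have hs : update s i 0 = s := update_eq_self_iff.2 h.symm
    rw [bd_apply_of_eq_zero _ h, eps_apply_of_eq_zero P f h, hmt_apply_of_eq_zero P _ h,
      bd_apply_of_ne_zero f (by simp), bd_apply_of_ne_zero f (by simp)]
    simp only [update_idem, hs, zcount_update_self, mul_smul_comm, ← smul_add, smul_smul,
      ← pow_add, Even.neg_one_pow ⟨_, rfl⟩, one_smul, ← add_mul, sub_add_cancel, one_mul,
      zero_add, sub_zero]
  · rw [hmt_apply_of_ne_zero P _ h, add_zero, bd_apply_of_ne_zero _ h,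
      hmt_apply_of_eq_zero P f (update_self ..), zcount_update_self, smul_smul, ← pow_add,
      Even.neg_one_pow ⟨_, rfl⟩, one_smul, update_idem, update_idem,
      sub_eps_apply_of_ne_zero P f h]

end Operators

theorem hmt_identities_general {n : ℕ} {A : Type*} [Ring A] (P : Fin n → A)
    (hcomm : ∀ i j, P i * P j = P j * P i) :
    (∀ (i : Fin n) (f : Fam n A), hmt P i (hmt P i f) = 0) ∧
    (∀ (i j : Fin n) (f : Fam n A), hmt P i (hmt P j f) + hmt P j (hmt P i f) = 0) ∧
    (∀ (i j : Fin n) (f : Fam n A), i ≠ j → bd i (hmt P j f) + hmt P j (bd i f) = 0) ∧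
    (∀ (i : Fin n) (f : Fam n A), bd i (hmt P i f) + hmt P i (bd i f) = f - eps P i f) :=
  ⟨fun _ f => hmt_hmt_self P f,
    fun i j f => hmt_hmt_add_hmt_hmt P f (hcomm i j),
    fun _ _ f hij => bd_hmt_add_hmt_bd P f hij,
    fun _ f => bd_hmt_add_hmt_bd_self P f⟩

theorem hmt_identities {n : ℕ} {A : Type*} [Ring A] (P : Fin n → A)
    (hidem : ∀ i, P i * P i = P i)
    (hcomm : ∀ i j, P i * P j = P j * P i) :
    (∀ (i : Fin n) (f : Fam n A), hmt P i (hmt P i f) = 0) ∧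
    (∀ (i j : Fin n) (f : Fam n A), hmt P i (hmt P j f) + hmt P j (hmt P i f) = 0) ∧
    (∀ (i j : Fin n) (f : Fam n A), i ≠ j → bd i (hmt P j f) + hmt P j (bd i f) = 0) ∧
    (∀ (i : Fin n) (f : Fam n A), bd i (hmt P i f) + hmt P i (bd i f) = f - eps P i f) :=
  hmt_identities_general P hcomm
end

section
/- The Parshin residue map on n-forms of the Laurent polynomial ring, defined on monomial forms by res(t_1^{c_{0,1}}⋯t_n^{c_{0,n}} d(t_1^{c_{1,1}}⋯t_n^{c_{1,n}}) ∧ ⋯ ∧ d(t_1^{c_{n,1}}⋯t_n^{c_{n,n}})) := det(c_{i,j})_{1≤i,j≤n} when Σ_{p=0}^n c_{p,i} = 0 for all i, and 0 otherwise, satisfies: for f_i = t_1^{c_{i,1}}⋯t_n^{c_{i,n}} multiplication operators and the projectors P_j^± onto λ_j ≥ 0 (resp. λ_j < 0), one has res f_0 df_1 ⋯ df_n = (−1)^n tr Σ_{π∈S_n} sgn(π) Σ_{γ_1…γ_n∈{±}} (−1)^{γ_1+⋯+γ_n} (P_1^{−γ_1} ad(f_{π(1)}) P_1^{γ_1}) ⋯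 (P_n^{−γ_n} ad(f_{π(n)}) P_n^{γ_n}) f_0. -/
/-!
Because `P^{-γ} P^{γ} = 0`, each factor `P_j^{-γ_j} ad(f) P_j^{γ_j}` collapses to
`P_j^{-γ_j} f P_j^{γ_j}`, so every term of the sum sends `t^m` to a scalar multiple of `t^{m+s}`,
where `s = ∑_p c_p` is the total exponent; the diagonal, hence the trace, vanishes unless `s = 0`.
The scalar is a product over the coordinates `j` of indicators that the `j`-th shift carries
`m_j` (translated by the shifts applied before it) across `0` in the direction prescribed by `γ_j`.
Summing over the signs `γ` turns it into a product of differences of step functions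
`[u ≤ m_j] - [v ≤ m_j]`, whose sum over `m_j ∈ ℤ` is `v - u = -c_{π(j)+1, j}` whatever the
translation. Hence the trace is `∑_π sgn π ∏_j (-c_{π(j)+1, j}) = (-1)^n det`.
-/

open scoped Classical

/-- Multiplication by the monomial `t₁^{c 1} ⋯ t_n^{c n}`. -/
noncomputable def monoOp {n : ℕ} (k : Type*) [Field k] (c : Fin n → ℤ) :
    Module.End k ((Fin n → ℤ) →₀ k) :=
  Finsupp.lmapDomain k k (fun m => m + c)

/-- The projector `P_j⁺` onto monomials with `λ_j ≥ 0`. -/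
noncomputable def PplusJ {n : ℕ} (k : Type*) [Field k] (j : Fin n) :
    Module.End k ((Fin n → ℤ) →₀ k) :=
  Finsupp.lsum k fun m : Fin n → ℤ => if 0 ≤ m j then Finsupp.lsingle m else 0

/-- `P_j^γ` for a sign `γ` (encoded by a boolean: `true` is `+`). -/
noncomputable def PsgnJ {n : ℕ} (k : Type*) [Field k] (j : Fin n) (b : Bool) :
    Module.End k ((Fin n → ℤ) →₀ k) :=
  if b then PplusJ k j else 1 - PplusJ k j

/-- The diagonal trace (the operators below have finite rank, and the trace is
the sum of the diagonal matrix entries in the monomial basis). -/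
noncomputable def trDN {n : ℕ} {k : Type*} [Field k]
    (φ : Module.End k ((Fin n → ℤ) →₀ k)) : k :=
  ∑ᶠ m : Fin n → ℤ, φ (Finsupp.single m 1) m

/-- `(P₁^{−γ₁} ad(f_{π(1)}) P₁^{γ₁}) ⋯ (P_n^{−γ_n} ad(f_{π(n)}) P_n^{γ_n}) f₀`,
where `f_i = monoOp k (c i)` (row `0` of `c` being `f₀`) and
`ad(f) x = f x − x f`. -/
noncomputable def residueTerm {n : ℕ} (k : Type*) [Field k]
    (c : Fin (n + 1) → Fin n → ℤ) (π : Equiv.Perm (Fin n)) (γ : Fin n → Bool) :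
    Module.End k ((Fin n → ℤ) →₀ k) :=
  (List.finRange n).foldr
    (fun i acc =>
      PsgnJ k i (!γ i) *
        (monoOp k (c (π i).succ) * (PsgnJ k i (γ i) * acc)
          - (PsgnJ k i (γ i) * acc) * monoOp k (c (π i).succ)))
    (monoOp k (c 0))

open Function Finsupp

theorem mul_commutator_of_mul_eq_zero {R : Type*} [Ring R] {p q f a : R} (h : p * q = 0) :
    p * (f * (q * a) - q * a * f) = p * f * q * a := by
  rw [mul_sub, ← mul_assoc p (q * a), ← mul_assoc p q, h, zero_mul, zero_mul, sub_zero,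
    mul_assoc p f, mul_assoc p, mul_assoc]

theorem hasFiniteSupport_prod_apply {ι α R : Type*} [Fintype ι] [CommMonoidWithZero R]
    (f : ι → α → R) (hf : ∀ i, HasFiniteSupport (f i)) :
    HasFiniteSupport fun x : ι → α => ∏ i, f i (x i) :=
  (Set.Finite.pi hf).subset fun _ hx i _ h0 => hx (Finset.prod_eq_zero (Finset.mem_univ i) h0)

theorem finsum_prod_apply {ι α R : Type*} [Fintype ι] [CommSemiring R] (f : ι → α → R)
    (hf : ∀ i, HasFiniteSupport (f i)) :
    ∑ᶠ x : ι → α, ∏ i, f i (x i) = ∏ i, ∑ᶠ a, f i a := by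
  have hsupp : support (fun x : ι → α => ∏ i, f i (x i)) ⊆
      ↑(Fintype.piFinset fun i => (hf i).toFinset) :=
    fun x hx => Fintype.mem_piFinset.2 fun i => (hf i).mem_toFinset.2 fun h0 =>
      hx (Finset.prod_eq_zero (Finset.mem_univ i) h0)
  rw [finsum_eq_finsetSum_of_support_subset _ hsupp, ← Finset.prod_univ_sum]
  exact Finset.prod_congr rfl fun i _ =>
    (finsum_eq_finsetSum_of_support_subset _ fun _ => (hf i).mem_toFinset.2).symm

theorem finsum_ite_le_sub_ite_le {R : Type*} [Ring R] (u v : ℤ) :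
    ∑ᶠ x : ℤ, ((if u ≤ x then 1 else 0) - (if v ≤ x then 1 else 0) : R) = v - u := by
  wlog h : u ≤ v generalizing u v
  · have := this v u (by omega)
    rw [← neg_sub, ← this, ← finsum_neg_distrib]
    exact finsum_congr fun x => by abel
  have hico : ∀ x, ((if u ≤ x then 1 else 0) - (if v ≤ x then 1 else 0) : R)
      = if x ∈ Finset.Ico u v then 1 else 0 := by
    intro x
    simp only [Finset.mem_Ico]
    split_ifs <;> first | (exfalso; omega) | simp
  simp_rw [hico]
  rw [finsum_eq_finsetSum_of_support_subset (s := Finset.Ico u v) _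
      (support_subset_iff'.2 fun _ hx => if_neg (Finset.mem_coe.not.1 hx)),
    Finset.sum_ite_mem, Finset.inter_self, Finset.sum_const, Int.card_Ico, nsmul_one]
  rw [← Int.cast_natCast, Int.toNat_of_nonneg (by omega)]
  exact Int.cast_sub v u

theorem hasFiniteSupport_ite_le_sub_ite_le {R : Type*} [Ring R] (u v : ℤ) :
    HasFiniteSupport fun x : ℤ => ((if u ≤ x then 1 else 0) - (if v ≤ x then 1 else 0) : R) :=
  (Set.finite_Ico (min u v) (max u v)).subset fun x hx => by
    simp only [mem_support, Set.mem_Ico] at hx ⊢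
    split_ifs at hx <;> first | omega | simp at hx

theorem finsum_sum_mul_prod_ite_le_sub_ite_le {ι κ R : Type*} [Fintype ι] [CommRing R]
    (s : Finset κ) (w : κ → R) (u v : κ → ι → ℤ) :
    ∑ᶠ x : ι → ℤ, ∑ j ∈ s, w j * ∏ i, ((if u j i ≤ x i then 1 else 0) -
      (if v j i ≤ x i then 1 else 0)) = ∑ j ∈ s, w j * ∏ i, ((v j i : R) - u j i) := by
  set F : κ → ι → ℤ → R := fun j i y =>
    (if u j i ≤ y then 1 else 0) - (if v j i ≤ y then 1 else 0)
  have hF : ∀ j i, HasFiniteSupport (F j i) := fun j i => hasFiniteSupport_ite_le_sub_ite_le _ _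
  rw [finsum_sum_comm _ _ fun j _ => (hasFiniteSupport_prod_apply (F j) (hF j)).fun_mul_right _]
  refine Finset.sum_congr rfl fun j _ => ?_
  rw [← mul_finsum' _ _ (hasFiniteSupport_prod_apply _ (hF j)), finsum_prod_apply _ (hF j)]
  simp only [F, finsum_ite_le_sub_ite_le]

/-- The offsets `r` depend only on the shifts, not on the operators or their weights; this is what
lets the weights be summed over the signs `γ` factor by factor. -/
theorem exists_foldr_mul_apply_single {R M ι : Type*} [CommSemiring R] [AddCommMonoid M]
    [DecidableEq ι] (d : ι → M) (d₀ : M) {l : List ι} (hl : l.Nodup) :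
    ∃ r : ι → M, ∀ (T : ι → Module.End R (M →₀ R)) (w : ι → M → R)
      (T₀ : Module.End R (M →₀ R)),
      (∀ i m, T i (single m 1) = w i m • single (m + d i) 1) →
      (∀ m, T₀ (single m 1) = single (m + d₀) 1) →
      ∀ m, l.foldr (fun i A => T i * A) T₀ (single m 1) =
        (∏ i ∈ l.toFinset, w i (m + r i)) • single (m + (d₀ + ∑ i ∈ l.toFinset, d i)) 1 := by
  induction l with
  | nil => exact ⟨0, fun T w T₀ _ hT₀ m => by simp [hT₀]⟩
  | cons i l ih =>
    obtain ⟨r, hr⟩ := ih hl.of_cons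
    have hi : i ∉ l.toFinset := by simpa using (List.nodup_cons.mp hl).1
    refine ⟨Function.update r i (d₀ + ∑ j ∈ l.toFinset, d j), fun T w T₀ hT hT₀ m => ?_⟩
    have hprod : ∏ j ∈ l.toFinset, w j (m + Function.update r i (d₀ + ∑ j ∈ l.toFinset, d j) j)
        = ∏ j ∈ l.toFinset, w j (m + r j) :=
      Finset.prod_congr rfl fun j hj => by
        rw [Function.update_of_ne (by rintro rfl; exact hi hj)]
    rw [List.foldr_cons, Module.End.mul_apply, hr T w T₀ hT hT₀, map_smul, hT, smul_smul,
      List.toFinset_cons, Finset.prod_insert hi, Finset.sum_insert hi, hprod,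
      Function.update_self, mul_comm, add_assoc, add_left_comm _ (d i), add_comm _ (d i)]

section ResidueTerm

variable {n : ℕ} {k : Type*} [Field k]

theorem monoOp_single (c m : Fin n → ℤ) (a : k) :
    monoOp k c (single m a) = single (m + c) a :=
  mapDomain_single

theorem PsgnJ_single (j : Fin n) (b : Bool) (m : Fin n → ℤ) (a : k) :
    PsgnJ k j b (single m a) = if decide (0 ≤ m j) = b then single m a else 0 := by
  by_cases h : 0 ≤ m j <;> cases b <;> simp [PsgnJ, PplusJ, h]

theorem PsgnJ_not_mul_PsgnJ (j : Fin n) (b : Bool) :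
    PsgnJ k j (!b) * PsgnJ k j b = 0 := by
  refine lhom_ext fun m a => ?_
  rw [Module.End.mul_apply, PsgnJ_single]
  split_ifs with h
  · simp [PsgnJ_single, ← h]
  · simp

variable (k) in
/-- The one-coordinate matrix coefficient of `P^{!b} f P^b`, for `f` the shift by `δ`. -/
def crossCoeff (b : Bool) (δ y : ℤ) : k :=
  if decide (0 ≤ y) = b ∧ decide (0 ≤ y + δ) = !b then 1 else 0

theorem PsgnJ_mul_monoOp_mul_PsgnJ_single (c : Fin n → ℤ) (j : Fin n) (b : Bool)
    (m : Fin n → ℤ) :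
    (PsgnJ k j (!b) * monoOp k c * PsgnJ k j b) (single m 1) =
      crossCoeff k b (c j) (m j) • single (m + c) 1 := by
  simp only [Module.End.mul_apply, PsgnJ_single, crossCoeff]
  split_ifs <;> simp_all [monoOp_single, PsgnJ_single]

theorem sum_bool_sign_mul_crossCoeff (δ x a : ℤ) :
    ∑ b : Bool, (if b then 1 else -1) * crossCoeff k b δ (x + a) =
      (if -a ≤ x then 1 else 0) - (if -a - δ ≤ x then 1 else 0) := by
  have hu : -a ≤ x ↔ 0 ≤ x + a := by omega
  have hv : -a - δ ≤ x ↔ 0 ≤ x + a + δ := by omega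
  by_cases h₁ : 0 ≤ x + a <;> by_cases h₂ : 0 ≤ x + a + δ <;>
    simp [crossCoeff, hu, hv, h₁, h₂]

theorem sum_sign_mul_prod_crossCoeff {ι : Type*} [Fintype ι] [DecidableEq ι] (δ x a : ι → ℤ) :
    ∑ γ : ι → Bool,
        (∏ i, if γ i then (1 : k) else -1) * ∏ i, crossCoeff k (γ i) (δ i) (x i + a i) =
      ∏ i, ((if -a i ≤ x i then 1 else 0) - (if -a i - δ i ≤ x i then 1 else 0)) := by
  simp_rw [← Finset.prod_mul_distrib, ← sum_bool_sign_mul_crossCoeff]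
  exact (Fintype.prod_sum fun i b =>
    (if b then 1 else -1) * crossCoeff k b (δ i) (x i + a i)).symm

theorem residueTerm_eq_foldr (c : Fin (n + 1) → Fin n → ℤ) (π : Equiv.Perm (Fin n))
    (γ : Fin n → Bool) :
    residueTerm k c π γ = (List.finRange n).foldr
      (fun i A => (PsgnJ k i (!γ i) * monoOp k (c (π i).succ) * PsgnJ k i (γ i)) * A)
      (monoOp k (c 0)) := by
  unfold residueTerm
  congr 1
  funext i A
  exact mul_commutator_of_mul_eq_zero (R := Module.End k ((Fin n → ℤ) →₀ k))
    (PsgnJ_not_mul_PsgnJ i (γ i))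

theorem exists_residueTerm_single (c : Fin (n + 1) → Fin n → ℤ) :
    ∃ r : Equiv.Perm (Fin n) → Fin n → ℤ, ∀ π γ m,
      residueTerm k c π γ (single m 1) =
        (∏ i, crossCoeff k (γ i) (c (π i).succ i) (m i + r π i)) • single (m + ∑ p, c p) 1 := by
  choose r hr using fun π : Equiv.Perm (Fin n) =>
    exists_foldr_mul_apply_single (R := k) (fun i => c (π i).succ) (c 0) (List.nodup_finRange n)
  have htot : ∀ π : Equiv.Perm (Fin n),
      c 0 + ∑ i ∈ (List.finRange n).toFinset, c (π i).succ = ∑ p, c p := fun π => by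
    rw [Fin.sum_univ_succ, List.toFinset_finRange, Equiv.sum_comp π fun i => c i.succ]
  refine ⟨fun π i => r π i i, fun π γ m => ?_⟩
  rw [residueTerm_eq_foldr, hr π _ (fun i v => crossCoeff k (γ i) (c (π i).succ i) (v i)) _
    (fun i v => PsgnJ_mul_monoOp_mul_PsgnJ_single _ _ _ v) (fun v => monoOp_single _ v 1),
    htot, List.toFinset_finRange]
  rfl

theorem exists_sum_sign_smul_residueTerm_single (c : Fin (n + 1) → Fin n → ℤ) :
    ∃ r : Equiv.Perm (Fin n) → Fin n → ℤ, ∀ m,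
      (∑ π : Equiv.Perm (Fin n), ((Equiv.Perm.sign π : ℤˣ) : ℤ) •
        ∑ γ : Fin n → Bool, (∏ i : Fin n, (if γ i then (1 : ℤ) else -1)) • residueTerm k c π γ)
          (single m 1) =
        (∑ π : Equiv.Perm (Fin n), ((Equiv.Perm.sign π : ℤˣ) : k) *
          ∏ i, ((if -r π i ≤ m i then 1 else 0) -
            (if -r π i - c (π i).succ i ≤ m i then 1 else 0))) • single (m + ∑ p, c p) 1 := by
  obtain ⟨r, hr⟩ := exists_residueTerm_single (k := k) c
  refine ⟨r, fun m => ?_⟩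
  simp only [LinearMap.sum_apply, LinearMap.smul_apply, hr, ← Int.cast_smul_eq_zsmul k, smul_smul,
    ← Finset.sum_smul]
  congr 1
  refine Finset.sum_congr rfl fun π _ => ?_
  push_cast
  rw [← sum_sign_mul_prod_crossCoeff, Finset.mul_sum]

end ResidueTerm

theorem parshin_residue_as_trace {n : ℕ} {k : Type*} [Field k]
    (c : Fin (n + 1) → Fin n → ℤ) :
    ((if ∀ j : Fin n, ∑ p : Fin (n + 1), c p j = 0
        then Matrix.det (Matrix.of fun i j : Fin n => c i.succ j)
        else 0 : ℤ) : k)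
    = (-1 : k) ^ n *
        trDN (∑ π : Equiv.Perm (Fin n),
          ((Equiv.Perm.sign π : ℤˣ) : ℤ) •
            ∑ γ : Fin n → Bool,
              (∏ i : Fin n, (if γ i then (1 : ℤ) else -1)) • residueTerm k c π γ) := by
  obtain ⟨r, hr⟩ := exists_sum_sign_smul_residueTerm_single (k := k) c
  unfold trDN
  simp only [hr, Finsupp.smul_apply, smul_eq_mul]
  by_cases hc : ∀ j, ∑ p, c p j = 0
  · have hs : ∑ p, c p = 0 := funext fun j => by simpa using hc j
    simp only [hs, add_zero, single_eq_same, mul_one]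
    rw [finsum_sum_mul_prod_ite_le_sub_ite_le, if_pos hc, Int.cast_det, Matrix.det_apply',
      Finset.mul_sum]
    refine Finset.sum_congr rfl fun π _ => ?_
    simp only [Matrix.map_apply, Matrix.of_apply, Int.cast_sub, Int.cast_neg, sub_sub_cancel_left,
      Finset.prod_neg, Finset.card_univ, Fintype.card_fin]
    rw [mul_left_comm, ← mul_assoc ((-1 : k) ^ n), ← mul_pow, neg_one_mul, neg_neg, one_pow,
      one_mul]
  · have hs : ∀ m : Fin n → ℤ, m + ∑ p, c p ≠ m := fun m h =>
      hc fun j => by simpa using congrFun (add_eq_left.mp h) j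
    rw [if_neg hc, Int.cast_zero, finsum_eq_zero_of_forall_eq_zero fun m => by
      rw [single_eq_of_ne' (hs m), mul_zero], mul_zero]
end
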